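/- The set ℤ × (1/p)ℤ is a spectrum for the measure μ_B: the exponentials {e_λ : λ ∈ ℤ × (1/p)ℤ} form an orthonormal basis for L²(μ_B). -/

import Mathlib

open MeasureTheory Complex Filter Topology

noncomputable section

def expv {d : ℕ} (t x : Fin d → ℝ) : ℂ :=
  Complex.exp (2 * Real.pi * Complex.I * (∑ i, t i * x i))

/-- The `n`-th binary digit of `x` (the terminating expansion at dyadic
rationals): `x_n = ⌊2^n x⌋ mod 2`. -/
def binDigit (n : ℕ) (x : ℝ) : ℝ :=
  ((⌊(2 : ℝ) ^ n * x⌋ % 2 : ℤ) : ℝ)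

/-- `g(x) = -∑_{n ≥ 1} (n/2) x_n / 2^n` where `x = ∑ x_n / 2^n` is the binary
expansion of `x`. -/
def gfun (x : ℝ) : ℝ :=
  -∑' n : ℕ, ((n + 1 : ℝ) / 2) * binDigit (n + 1) x / 2 ^ (n + 1)

/-!
Write `e(t) = exp(2πi t)`. `μ_B` is the image of normalised Lebesgue measure on `(0,1] × (0,p]`
under the shear `(x, y) ↦ (x, g x + y)`, and for `λ = (m, k/p)` the exponential `e_λ` pulls back
to `e(m x) · e(k g(x)/p) · e(k y/p)`: a character of `(0,1]` in `x`, times a unimodular function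
of `x`, times a character of `(0,p]` in `y`. Orthonormality is then Fubini together with
`∫₀ᵖ e(k y/p) dy = p δ_k`. For completeness, if `f ⊥ e_λ` for all `λ`, then for each `k` the
twisted coefficient `x ↦ e(k g(x)/p) ∫₀ᵖ e(k y/p) f(x, g x + y) dy` lies in `L²(0,1]` and has
vanishing Fourier coefficients, so it is zero; hence almost every vertical slice of `f` has
vanishing Fourier coefficients on `(0,p]`, and `f = 0`. Both uniqueness statements come from
Parseval's identity.
-/

open Set
open scoped NNReal InnerProductSpace

section IntervalFourier

variable {T : ℝ}

lemma continuous_fourier_coe (n : ℤ) : Continuous fun x : ℝ => fourier n (x : AddCircle T) :=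
  (fourier n).continuous.comp (AddCircle.continuous_mk' T)

lemma fourier_coe_add (n : ℤ) (x y : ℝ) :
    fourier n ((x + y : ℝ) : AddCircle T) =
      fourier n (x : AddCircle T) * fourier n (y : AddCircle T) := by
  simp only [fourier_coe_apply, ← Complex.exp_add]
  push_cast
  ring_nf

lemma fourierCoeffOn_eq_setIntegral_Ioc (hT : 0 < T) (f : ℝ → ℂ) (n : ℤ) :
    fourierCoeffOn hT f n = T⁻¹ • ∫ x in Ioc 0 T, fourier (-n) (x : AddCircle T) * f x := by
  rw [fourierCoeffOn_eq_integral, intervalIntegral.integral_of_le hT.le, sub_zero, one_div]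
  rfl

lemma hasSum_sq_norm_integral_fourier_mul (hT : 0 < T) {f : ℝ → ℂ}
    (hf : MemLp f 2 (volume.restrict (Ioc 0 T))) :
    HasSum (fun n : ℤ => ‖∫ x in Ioc 0 T, fourier n (x : AddCircle T) * f x‖ ^ 2)
      (T * ∫ x in Ioc 0 T, ‖f x‖ ^ 2) := by
  have h := (hasSum_sq_fourierCoeffOn hT hf).mul_left (T ^ 2)
  rw [← (Equiv.neg ℤ).hasSum_iff, intervalIntegral.integral_of_le hT.le, sub_zero,
    smul_eq_mul, ← mul_assoc, sq, mul_inv_cancel_right₀ hT.ne'] at h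
  refine h.congr_fun fun n => ?_
  simp only [Function.comp_apply, Equiv.neg_apply, fourierCoeffOn_eq_setIntegral_Ioc, neg_neg,
    norm_smul, norm_inv, Real.norm_eq_abs, abs_of_pos hT]
  field_simp

lemma norm_integral_fourier_mul_sq_le (hT : 0 < T) {f : ℝ → ℂ}
    (hf : MemLp f 2 (volume.restrict (Ioc 0 T))) (n : ℤ) :
    ‖∫ x in Ioc 0 T, fourier n (x : AddCircle T) * f x‖ ^ 2 ≤ T * ∫ x in Ioc 0 T, ‖f x‖ ^ 2 :=
  le_hasSum (hasSum_sq_norm_integral_fourier_mul hT hf) n fun _ _ => by positivity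

lemma ae_eq_zero_of_forall_integral_fourier_mul_eq_zero (hT : 0 < T) {f : ℝ → ℂ}
    (hf : MemLp f 2 (volume.restrict (Ioc 0 T)))
    (h : ∀ n : ℤ, ∫ x in Ioc 0 T, fourier n (x : AddCircle T) * f x = 0) :
    f =ᵐ[volume.restrict (Ioc 0 T)] 0 := by
  have hsum := hasSum_sq_norm_integral_fourier_mul hT hf
  simp only [h, norm_zero, ne_eq, OfNat.ofNat_ne_zero, not_false_eq_true, zero_pow] at hsum
  have hint : ∫ x in Ioc 0 T, ‖f x‖ ^ 2 = 0 := by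
    simpa [hT.ne'] using hasSum_zero.unique hsum
  filter_upwards [(integral_eq_zero_iff_of_nonneg (fun _ => by positivity)
    (hf.integrable_norm_pow two_ne_zero)).1 hint] with x hx
  simpa using hx

lemma integral_fourier_Ioc (hT : 0 < T) (n : ℤ) :
    ∫ x in Ioc 0 T, fourier n (x : AddCircle T) = if n = 0 then (T : ℂ) else 0 := by
  have : Fact (0 < T) := ⟨hT⟩
  have h := congrFun (fourierCoeff_fourier (T := T) n) 0
  rw [fourierCoeff, AddCircle.integral_haarAddCircle] at h
  simp only [neg_zero, fourier_zero, one_smul, Pi.single_apply] at h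
  have hpre := AddCircle.intervalIntegral_preimage T 0 (fourier n)
  rw [zero_add, intervalIntegral.integral_of_le hT.le] at hpre
  rw [hpre, ← smul_inv_smul₀ hT.ne' (∫ t : AddCircle T, fourier n t), h]
  rcases eq_or_ne n 0 with rfl | hn
  · simp
  · simp [hn.symm, hn]

end IntervalFourier

section Product

variable {α β : Type*} [MeasurableSpace α] [MeasurableSpace β] {μ : Measure α} {ν : Measure β}
  [SFinite ν]

lemma ae_memLp_two_prodMk_left [SFinite μ] {G : α × β → ℂ} (hG : MemLp G 2 (μ.prod ν)) :
    ∀ᵐ x ∂μ, MemLp (fun y => G (x, y)) 2 ν := by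
  filter_upwards [hG.1.prodMk_left, (hG.integrable_norm_pow two_ne_zero).prod_right_ae]
    with x hxm hxi
  exact (memLp_two_iff_integrable_sq_norm hxm).2 hxi

lemma ae_prod_eq_zero_of_ae_ae {G : α × β → ℂ} (hG : AEStronglyMeasurable G (μ.prod ν))
    (h : ∀ᵐ x ∂μ, ∀ᵐ y ∂ν, G (x, y) = 0) : G =ᵐ[μ.prod ν] 0 := by
  have hmeas : MeasurableSet {z | hG.mk G z = 0} :=
    hG.stronglyMeasurable_mk.measurable (measurableSet_singleton 0)
  have hmk : ∀ᵐ z ∂μ.prod ν, hG.mk G z = 0 := by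
    refine (Measure.ae_prod_iff_ae_ae hmeas).2 ?_
    filter_upwards [h, Measure.ae_ae_of_ae_prod hG.ae_eq_mk] with x hx hx'
    filter_upwards [hx, hx'] with y hy hy'
    rwa [← hy']
  filter_upwards [hG.ae_eq_mk, hmk] with z hz hz'
  rwa [hz]

end Product

abbrev rectVolume (S T : ℝ) : Measure (ℝ × ℝ) :=
  (volume.restrict (Ioc 0 S)).prod (volume.restrict (Ioc 0 T))

theorem ae_eq_zero_of_forall_integral_twisted_fourier_mul_eq_zero {S T : ℝ} (hS : 0 < S)
    (hT : 0 < T) {u : ℤ → ℝ → ℂ} (hu_meas : ∀ k, Measurable (u k)) (hu : ∀ k x, ‖u k x‖ = 1)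
    {G : ℝ × ℝ → ℂ} (hG : MemLp G 2 (rectVolume S T))
    (horth : ∀ m k : ℤ, ∫ z, fourier m (z.1 : AddCircle S) * u k z.1 *
      fourier k (z.2 : AddCircle T) * G z ∂rectVolume S T = 0) :
    G =ᵐ[rectVolume S T] 0 := by
  set A : ℤ → ℝ → ℂ := fun k x => ∫ y in Ioc 0 T, fourier k (y : AddCircle T) * G (x, y)
  have hslices := ae_memLp_two_prodMk_left hG
  have hGsq : Integrable (fun z => ‖G z‖ ^ 2) (rectVolume S T) :=
    hG.integrable_norm_pow two_ne_zero
  have hB : ∀ k, MemLp (fun x => u k x * A k x) 2 (volume.restrict (Ioc 0 S)) := by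
    intro k
    have hAm : AEStronglyMeasurable (A k) (volume.restrict (Ioc 0 S)) :=
      ((continuous_fourier_coe k).aestronglyMeasurable.comp_snd.mul
        hG.1).integral_prod_right'
    have hBm := (hu_meas k).aestronglyMeasurable.mul hAm
    refine (memLp_two_iff_integrable_sq_norm hBm).2
      ((hGsq.integral_prod_left.const_mul T).mono' (hBm.norm.pow 2) ?_)
    filter_upwards [hslices] with x hx
    rw [norm_pow, norm_norm, Pi.mul_apply, norm_mul, hu, one_mul]
    exact norm_integral_fourier_mul_sq_le hT hx k
  have hB_zero : ∀ k, (fun x => u k x * A k x) =ᵐ[volume.restrict (Ioc 0 S)] 0 := by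
    refine fun k => ae_eq_zero_of_forall_integral_fourier_mul_eq_zero hS (hB k) fun m => ?_
    have hint : Integrable (fun z => fourier m (z.1 : AddCircle S) * u k z.1 *
        fourier k (z.2 : AddCircle T) * G z) (rectVolume S T) := by
      refine (hG.integrable one_le_two).bdd_mul (c := 1) ?_ (ae_of_all _ fun z => ?_)
      · exact ((continuous_fourier_coe m).measurable.comp measurable_fst |>.mul
          ((hu_meas k).comp measurable_fst) |>.mul
          ((continuous_fourier_coe k).measurable.comp measurable_snd)).aestronglyMeasurable
      · simp only [norm_mul, hu, fourier_apply, Circle.norm_coe, mul_one, le_refl]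
    rw [← horth m k, integral_prod _ hint]
    refine integral_congr_ae (ae_of_all _ fun x => ?_)
    simp only [A, ← integral_const_mul, mul_assoc]
  have hA_zero : ∀ᵐ x ∂volume.restrict (Ioc 0 S), ∀ k, A k x = 0 :=
    ae_all_iff.2 fun k => (hB_zero k).mono fun x hx => by
      simpa [hu] using congrArg norm hx
  refine ae_prod_eq_zero_of_ae_ae hG.1 ?_
  filter_upwards [hA_zero, hslices] with x hAx hx
  exact ae_eq_zero_of_forall_integral_fourier_mul_eq_zero hT hx hAx

lemma abs_binDigit_le_one (n : ℕ) (x : ℝ) : |binDigit n x| ≤ 1 := by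
  rcases Int.emod_two_eq ⌊(2 : ℝ) ^ n * x⌋ with h | h <;> simp [binDigit, h]

lemma measurable_binDigit (n : ℕ) : Measurable (binDigit n) :=
  (Measurable.of_discrete (f := fun k : ℤ => ((k % 2 : ℤ) : ℝ))).comp
    (measurable_id.const_mul _).floor

lemma summable_gfun_terms (x : ℝ) :
    Summable fun n : ℕ => ((n + 1 : ℝ) / 2) * binDigit (n + 1) x / 2 ^ (n + 1) := by
  have hgeom := (summable_nat_add_iff 1).2
    (summable_pow_mul_geometric_of_norm_lt_one 1 (r := (2 : ℝ)⁻¹) (by norm_num))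
  refine Summable.of_norm_bounded hgeom fun n => ?_
  have hd := abs_binDigit_le_one (n + 1) x
  rw [Real.norm_eq_abs, abs_div, abs_mul, abs_of_pos (by positivity : (0 : ℝ) < (n + 1) / 2),
    abs_of_pos (by positivity : (0 : ℝ) < 2 ^ (n + 1)), inv_pow, ← div_eq_mul_inv]
  push_cast
  gcongr
  nlinarith [show (0 : ℝ) ≤ n from n.cast_nonneg]

lemma measurable_gfun : Measurable gfun := by
  refine (measurable_of_tendsto_metrizable (fun N => ?_)
    (tendsto_pi_nhds.2 fun x => (summable_gfun_terms x).hasSum.tendsto_sum_nat)).neg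
  exact Finset.measurable_sum _ fun n _ => ((measurable_binDigit _).const_mul _).div_const _

def shear (z : ℝ × ℝ) : Fin 2 → ℝ := ![z.1, gfun z.1 + z.2]

lemma measurable_shear : Measurable shear := by
  refine measurable_pi_iff.2 fun i => ?_
  fin_cases i
  · exact measurable_fst
  · exact (measurable_gfun.comp measurable_fst).add measurable_snd

def muB (p : ℕ) : Measure (Fin 2 → ℝ) := ((p : ℝ≥0)⁻¹ • rectVolume 1 p).map shear

instance (p : ℕ) : IsFiniteMeasure (muB p) := by
  unfold muB; infer_instance

lemma integral_muB (p : ℕ) {f : (Fin 2 → ℝ) → ℂ} (hf : AEStronglyMeasurable f (muB p)) :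
    ∫ z, f z ∂muB p = (p : ℂ)⁻¹ * ∫ z, f (shear z) ∂rectVolume 1 p := by
  rw [muB, integral_map measurable_shear.aemeasurable hf, integral_smul_nnreal_measure,
    NNReal.smul_def, Complex.real_smul]
  push_cast
  rfl

lemma eq_muB {p : ℕ} (μ : Measure (Fin 2 → ℝ)) [IsFiniteMeasure μ]
    (hμ : ∀ f : (Fin 2 → ℝ) → ℂ, Measurable f → (∃ Cb : ℝ, ∀ z, ‖f z‖ ≤ Cb) →
      ∫ z, f z ∂μ = (p : ℂ)⁻¹ *
        ∫ x in Set.Icc (0 : ℝ) 1, ∫ y in Set.Icc (0 : ℝ) (p : ℝ), f ![x, gfun x + y]) :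
    μ = muB p := by
  refine ext_of_forall_integral_eq_of_IsFiniteMeasure fun f => ofReal_injective ?_
  have hf : Measurable fun z => (f z : ℂ) := measurable_ofReal.comp f.continuous.measurable
  have hbdd : ∀ z, ‖(f z : ℂ)‖ ≤ ‖f‖ := fun z => by simpa using f.norm_coe_le_norm z
  have hint : Integrable (fun z => (f (shear z) : ℂ)) (rectVolume 1 p) :=
    (integrable_const ‖f‖).mono' (hf.comp measurable_shear).aestronglyMeasurable
      (ae_of_all _ fun z => hbdd _)
  rw [← integral_complex_ofReal, ← integral_complex_ofReal, hμ _ hf ⟨_, hbdd⟩,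
    integral_muB p hf.aestronglyMeasurable, integral_prod _ hint,
    Measure.restrict_congr_set Ioc_ae_eq_Icc, Measure.restrict_congr_set Ioc_ae_eq_Icc]
  rfl

lemma expv_lattice_apply (p : ℕ) (m k : ℤ) (z : Fin 2 → ℝ) :
    expv ![(m : ℝ), (k : ℝ) / p] z =
      fourier m (z 0 : AddCircle (1 : ℝ)) * fourier k (z 1 : AddCircle (p : ℝ)) := by
  simp only [expv, Fin.sum_univ_two, fourier_coe_apply, ← Complex.exp_add, Matrix.cons_val_zero,
    Matrix.cons_val_one]
  push_cast
  ring_nf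

lemma continuous_fourier_mul_fourier {S T : ℝ} (a b : ℤ) :
    Continuous fun z : Fin 2 → ℝ => fourier a (z 0 : AddCircle S) * fourier b (z 1 : AddCircle T) :=
  ((continuous_fourier_coe a).comp (continuous_apply 0)).mul
    ((continuous_fourier_coe b).comp (continuous_apply 1))

lemma integral_fourier_mul_fourier_muB {p : ℕ} (hp : 0 < p) (a b : ℤ) :
    ∫ z, fourier a (z 0 : AddCircle (1 : ℝ)) * fourier b (z 1 : AddCircle (p : ℝ)) ∂muB p =
      if a = 0 ∧ b = 0 then 1 else 0 := by
  rw [integral_muB p (continuous_fourier_mul_fourier a b).aestronglyMeasurable]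
  simp only [shear, Matrix.cons_val_zero, Matrix.cons_val_one, fourier_coe_add,
    ← mul_assoc]
  rw [integral_prod_mul (fun x : ℝ => fourier a (x : AddCircle (1 : ℝ)) *
    fourier b (gfun x : AddCircle (p : ℝ))) (fun y : ℝ => fourier b (y : AddCircle (p : ℝ))),
    integral_fourier_Ioc (by exact_mod_cast hp)]
  rcases eq_or_ne b 0 with rfl | hb
  · have hp' : (p : ℂ) ≠ 0 := by exact_mod_cast hp.ne'
    simp only [fourier_zero, mul_one, integral_fourier_Ioc one_pos, and_true]
    split_ifs <;> simp [hp']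
  · simp [hb]

lemma memLp_comp_shear {p : ℕ} (hp : 0 < p) (f : Lp ℂ 2 (muB p)) :
    MemLp (fun z => f (shear z)) 2 (rectVolume 1 p) := by
  have h := (memLp_map_measure_iff (Lp.aestronglyMeasurable f)
    measurable_shear.aemeasurable).1 (Lp.memLp f)
  have hp' : (p : ℝ≥0) ≠ 0 := by exact_mod_cast hp.ne'
  have h' := h.smul_measure (c := (p : ℝ≥0)) ENNReal.coe_ne_top
  rwa [Measure.coe_nnreal_smul, smul_smul, mul_inv_cancel₀ hp', one_smul] at h'

lemma eq_zero_of_forall_integral_lattice_mul_eq_zero {p : ℕ} (hp : 0 < p) (f : Lp ℂ 2 (muB p))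
    (h : ∀ m k : ℤ, ∫ z, fourier m (z 0 : AddCircle (1 : ℝ)) *
      fourier k (z 1 : AddCircle (p : ℝ)) * f z ∂muB p = 0) : f = 0 := by
  have hG0 : (fun z => f (shear z)) =ᵐ[rectVolume 1 p] 0 := by
    refine ae_eq_zero_of_forall_integral_twisted_fourier_mul_eq_zero one_pos
      (by exact_mod_cast hp) (u := fun k x => fourier k (gfun x : AddCircle (p : ℝ)))
      (fun k => (continuous_fourier_coe k).measurable.comp measurable_gfun)
      (fun k x => by simp only [fourier_apply, Circle.norm_coe]) (memLp_comp_shear hp f)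
      fun m k => ?_
    have hint := h m k
    rw [integral_muB p (f := fun z => fourier m (z 0 : AddCircle (1 : ℝ)) *
      fourier k (z 1 : AddCircle (p : ℝ)) * f z)
      ((continuous_fourier_mul_fourier m k).aestronglyMeasurable.mul
      (Lp.aestronglyMeasurable f))] at hint
    simp only [shear, Matrix.cons_val_zero, Matrix.cons_val_one, fourier_coe_add,
      ← mul_assoc] at hint
    exact (mul_eq_zero.1 hint).resolve_left (inv_ne_zero (by exact_mod_cast hp.ne'))
  rw [Lp.eq_zero_iff_ae_eq_zero]
  exact (ae_map_iff measurable_shear.aemeasurable (measurableSet_eq_fun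
    (Lp.stronglyMeasurable f).measurable measurable_const)).2 (Measure.ae_smul_measure hG0 _)

def latticeSet (p : ℕ) : Set (Fin 2 → ℝ) := {lam | ∃ m k : ℤ, lam = ![(m : ℝ), (k : ℝ) / p]}

section Spectrum

variable {p : ℕ} (E : (Fin 2 → ℝ) → Lp ℂ 2 (muB p))

lemma inner_expv_lattice
    (hE : ∀ t : Fin 2 → ℝ, (E t : (Fin 2 → ℝ) → ℂ) =ᵐ[muB p] fun x => expv t x) (hp : 0 < p)
    (m k m' k' : ℤ) :
    ⟪E ![(m : ℝ), (k : ℝ) / p], E ![(m' : ℝ), (k' : ℝ) / p]⟫_ℂ =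
      if m = m' ∧ k = k' then 1 else 0 := by
  rw [L2.inner_def]
  have hae : (fun z => ⟪(E ![(m : ℝ), (k : ℝ) / p] : (Fin 2 → ℝ) → ℂ) z,
      (E ![(m' : ℝ), (k' : ℝ) / p] : (Fin 2 → ℝ) → ℂ) z⟫_ℂ) =ᵐ[muB p] fun z =>
        fourier (-m + m') (z 0 : AddCircle (1 : ℝ)) *
          fourier (-k + k') (z 1 : AddCircle (p : ℝ)) := by
    filter_upwards [hE ![(m : ℝ), (k : ℝ) / p], hE ![(m' : ℝ), (k' : ℝ) / p]] with z h h'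
    rw [RCLike.inner_apply, h, h', expv_lattice_apply, expv_lattice_apply, map_mul, ← fourier_neg,
      ← fourier_neg, fourier_add, fourier_add]
    ring
  rw [integral_congr_ae hae, integral_fourier_mul_fourier_muB hp]
  exact if_congr (by omega) rfl rfl

lemma orthonormal_expv_latticeSet
    (hE : ∀ t : Fin 2 → ℝ, (E t : (Fin 2 → ℝ) → ℂ) =ᵐ[muB p] fun x => expv t x) (hp : 0 < p) :
    Orthonormal ℂ fun lam : latticeSet p => E lam := by
  rw [orthonormal_iff_ite]
  rintro ⟨_, m, k, rfl⟩ ⟨_, m', k', rfl⟩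
  rw [inner_expv_lattice E hE hp]
  have hp' : (p : ℝ) ≠ 0 := by exact_mod_cast hp.ne'
  refine if_congr ?_ rfl rfl
  simp [Subtype.ext_iff, funext_iff, Fin.forall_fin_two, hp']

lemma topologicalClosure_span_expv_latticeSet
    (hE : ∀ t : Fin 2 → ℝ, (E t : (Fin 2 → ℝ) → ℂ) =ᵐ[muB p] fun x => expv t x) (hp : 0 < p) :
    (Submodule.span ℂ {g | ∃ lam ∈ latticeSet p, g = E lam}).topologicalClosure = ⊤ := by
  rw [Submodule.topologicalClosure_eq_top_iff, Submodule.eq_bot_iff]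
  intro f hf
  refine eq_zero_of_forall_integral_lattice_mul_eq_zero hp f fun m k => ?_
  have h0 : ⟪E ![((-m : ℤ) : ℝ), ((-k : ℤ) : ℝ) / p], f⟫_ℂ = 0 :=
    (Submodule.mem_orthogonal _ f).1 hf _ (Submodule.subset_span ⟨_, ⟨-m, -k, rfl⟩, rfl⟩)
  rw [L2.inner_def] at h0
  rw [← h0]
  refine integral_congr_ae ?_
  filter_upwards [hE ![((-m : ℤ) : ℝ), ((-k : ℤ) : ℝ) / p]] with z hz
  rw [RCLike.inner_apply, hz, expv_lattice_apply, map_mul, ← fourier_neg, ← fourier_neg, neg_neg,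
    neg_neg, mul_comm]

end Spectrum

theorem stmt18_general
    (p : ℕ) (hppos : 0 < p)
    (μ : Measure (Fin 2 → ℝ)) [IsProbabilityMeasure μ]
    -- μ_B is determined by ∫ f dμ_B = (1/p) ∫₀¹ ∫₀ᵖ f(x, g(x)+y) dy dx
    (hμ : ∀ f : (Fin 2 → ℝ) → ℂ, Measurable f →
      (∃ Cb : ℝ, ∀ z, ‖f z‖ ≤ Cb) →
      ∫ z, f z ∂μ = (p : ℂ)⁻¹ *
        ∫ x in Set.Icc (0 : ℝ) 1, ∫ y in Set.Icc (0 : ℝ) (p : ℝ),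
          f ![x, gfun x + y])
    (E : (Fin 2 → ℝ) → Lp ℂ 2 μ)
    (hE : ∀ t : Fin 2 → ℝ, (E t : (Fin 2 → ℝ) → ℂ) =ᵐ[μ] fun x => expv t x) :
    -- ℤ × (1/p)ℤ is a spectrum for μ_B
    Orthonormal ℂ
      (fun lam : {lam : Fin 2 → ℝ | ∃ m k : ℤ, lam = ![(m : ℝ), (k : ℝ) / p]} =>
        E (lam : Fin 2 → ℝ)) ∧
    (Submodule.span ℂ
      {g | ∃ lam ∈ {lam : Fin 2 → ℝ | ∃ m k : ℤ, lam = ![(m : ℝ), (k : ℝ) / p]},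
        g = E lam}).topologicalClosure = ⊤ := by
  obtain rfl : μ = muB p := eq_muB μ hμ
  exact ⟨orthonormal_expv_latticeSet E hE hppos, topologicalClosure_span_expv_latticeSet E hE hppos⟩

theorem stmt18
    (p : ℕ) (hppos : 0 < p) (hpodd : Odd p)
    (μ : Measure (Fin 2 → ℝ)) [IsProbabilityMeasure μ]
    -- μ_B is determined by ∫ f dμ_B = (1/p) ∫₀¹ ∫₀ᵖ f(x, g(x)+y) dy dx
    (hμ : ∀ f : (Fin 2 → ℝ) → ℂ, Measurable f →
      (∃ Cb : ℝ, ∀ z, ‖f z‖ ≤ Cb) →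
      ∫ z, f z ∂μ = (p : ℂ)⁻¹ *
        ∫ x in Set.Icc (0 : ℝ) 1, ∫ y in Set.Icc (0 : ℝ) (p : ℝ),
          f ![x, gfun x + y])
    (E : (Fin 2 → ℝ) → Lp ℂ 2 μ)
    (hE : ∀ t : Fin 2 → ℝ, (E t : (Fin 2 → ℝ) → ℂ) =ᵐ[μ] fun x => expv t x) :
    -- ℤ × (1/p)ℤ is a spectrum for μ_B
    Orthonormal ℂ
      (fun lam : {lam : Fin 2 → ℝ | ∃ m k : ℤ, lam = ![(m : ℝ), (k : ℝ) / p]} =>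
        E (lam : Fin 2 → ℝ)) ∧
    (Submodule.span ℂ
      {g | ∃ lam ∈ {lam : Fin 2 → ℝ | ∃ m k : ℤ, lam = ![(m : ℝ), (k : ℝ) / p]},
        g = E lam}).topologicalClosure = ⊤ :=
  stmt18_general p hppos μ hμ E hE
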